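/- arXiv:0708.0531 — 3 statements merged into one kernel-verified Lean document; each statement's English description precedes it below -/
import Mathlib

section
/- Let σ be a classical symbol of order a on ℝ with a ∉ ℤ. Then there exist complex constants (b_j)_{j∈ℕ} and S ∈ ℂ such that for every integer J > Re(a) + 1, lim_{N→∞} ( Σ_{n=-N}^{N} σ(n) − Σ_{j=0}^{J} b_j N^{a+1−j} ) = S, the limit being taken over integers N → ∞. (S is the Hadamard finite part fp_{N→∞} Σ_{n=-N}^{N} σ(n); since a ∉ ℤ none of the exponents a+1−j vanishes, so S is well defined.) -/
open MeasureTheory Filter Finset Complex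
open scoped Topology

/-- A smooth cut-off function on `ℝ`: vanishes near `0`, identically `1` for `|x| ≥ 1`. -/
structure IsCutoff1 (χ : ℝ → ℝ) : Prop where
  smooth : ContDiff ℝ (⊤ : ℕ∞) χ
  eq_zero_near : ∃ ε > (0 : ℝ), ∀ x : ℝ, |x| < ε → χ x = 0
  eq_one_far : ∀ x : ℝ, 1 ≤ |x| → χ x = 1

/-- `σ` is a classical symbol of order `a ∈ ℂ` on `ℝ`, with positively homogeneous components
`σh j` of degree `a − j` and cut-off `χ`:  for every `N` and `k` the `k`-th derivative of
`σ − Σ_{j<N} χ σh j` is `O((1+|x|)^{Re a − N − k})`. -/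
structure IsClassicalSymbol1 (χ : ℝ → ℝ) (a : ℂ) (σ : ℝ → ℂ) (σh : ℕ → ℝ → ℂ) : Prop where
  smooth : ContDiff ℝ (⊤ : ℕ∞) σ
  smooth_homog : ∀ j : ℕ, ContDiffOn ℝ (⊤ : ℕ∞) (σh j) {x : ℝ | x ≠ 0}
  homog : ∀ j : ℕ, ∀ t : ℝ, 0 < t → ∀ x : ℝ, x ≠ 0 →
    σh j (t * x) = (t : ℂ) ^ (a - (j : ℂ)) * σh j x
  estimate : ∀ N k : ℕ, ∃ C : ℝ, ∀ x : ℝ,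
    ‖iteratedDeriv k (fun y : ℝ => σ y - ∑ j ∈ Finset.range N, (χ y : ℂ) * σh j y) x‖
      ≤ C * (1 + |x|) ^ (a.re - N - k)

def AsymExp (s : ℂ) (f : ℕ → ℂ) (d : ℕ → ℂ) : Prop :=
  ∀ T : ℕ, ∃ C : ℝ, ∀ n : ℕ, 1 ≤ n →
    ‖f n - ∑ m ∈ Finset.range T, d m * (n : ℂ) ^ (s - (m : ℂ))‖ ≤ C * (n : ℝ) ^ (s.re - T)

lemma norm_natCpow (n : ℕ) (hn : 1 ≤ n) (w : ℂ) : ‖(n : ℂ) ^ w‖ = (n : ℝ) ^ w.re :=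
  Complex.norm_natCast_cpow_of_pos hn w

lemma cpow_tendsto_zero {w : ℂ} (hw : w.re < 0) :
    Tendsto (fun N : ℕ => (N : ℂ) ^ w) atTop (𝓝 0) := by
  have h1 : Tendsto (fun x : ℝ => x ^ w.re) atTop (𝓝 0) := by
    have := tendsto_rpow_neg_atTop (y := -w.re) (by linarith)
    simpa using this
  apply squeeze_zero_norm (a := fun N : ℕ => (N : ℝ) ^ w.re)
  · intro n
    rcases Nat.eq_zero_or_pos n with rfl | hn
    · have hne : w ≠ 0 := fun h => by simp [h] at hw
      simp [Complex.zero_cpow hne, Real.zero_rpow (show w.re ≠ 0 by linarith)]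
    · exact (norm_natCpow n hn w).le
  · exact h1.comp tendsto_natCast_atTop_atTop

lemma one_add_rpow_le (n : ℕ) (hn : 1 ≤ n) (p : ℝ) :
    (1 + (n : ℝ)) ^ p ≤ 2 ^ |p| * (n : ℝ) ^ p := by
  have hn1 : (1 : ℝ) ≤ (n : ℝ) := by exact_mod_cast hn
  rcases le_or_gt 0 p with hp | hp
  · rw [_root_.abs_of_nonneg hp]
    calc (1 + (n : ℝ)) ^ p ≤ (2 * n) ^ p := by
          apply Real.rpow_le_rpow (by linarith) (by linarith) hp
      _ = 2 ^ p * (n : ℝ) ^ p := Real.mul_rpow (by norm_num) (by linarith)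
  · have h1 : (1 + (n : ℝ)) ^ p ≤ (n : ℝ) ^ p :=
      Real.rpow_le_rpow_of_nonpos (by linarith) (by linarith) hp.le
    have h2 : (1 : ℝ) ≤ 2 ^ |p| := Real.one_le_rpow (by norm_num) (abs_nonneg p)
    nlinarith [Real.rpow_nonneg (by positivity : (0:ℝ) ≤ (n:ℝ)) p]


noncomputable def hfun (w : ℂ) (x : ℝ) : ℂ := Complex.exp ((Real.log (1 - x) : ℂ) * w)

lemma hfun_contDiffOn (w : ℂ) : ContDiffOn ℝ (⊤ : ℕ∞) (hfun w) (Set.Icc (0:ℝ) 2⁻¹) := by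
  have h1 : ContDiffOn ℝ (⊤ : ℕ∞) (fun x : ℝ => Real.log (1 - x)) (Set.Icc (0:ℝ) 2⁻¹) := by
    apply ContDiffOn.log
    · exact (contDiff_const.sub contDiff_id).contDiffOn
    · intro x hx
      simp only [Set.mem_Icc] at hx
      intro h; nlinarith [hx.1, hx.2]
  have h2 : ContDiffOn ℝ (⊤ : ℕ∞) (fun x : ℝ => ((Real.log (1 - x) : ℝ) : ℂ) * w)
      (Set.Icc (0:ℝ) 2⁻¹) :=
    (Complex.ofRealCLM.contDiff.comp_contDiffOn h1).mul contDiffOn_const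
  exact Complex.contDiff_exp.comp_contDiffOn h2

lemma hfun_hasDerivAt (w : ℂ) : HasDerivAt (hfun w) (-w) 0 := by
  have h1 : HasDerivAt (fun x : ℝ => 1 - x) (-1) 0 := by
    simpa using (hasDerivAt_id (0:ℝ)).const_sub 1
  have h2 : HasDerivAt (fun x : ℝ => Real.log (1 - x)) (-1) 0 := by
    have h3 : HasDerivAt Real.log ((1:ℝ) - 0)⁻¹ ((fun x : ℝ => 1 - x) 0) :=
      Real.hasDerivAt_log (by norm_num)
    have h4 := h3.comp 0 h1
    norm_num at h4
    exact h4
  have h4 := ((h2.ofReal_comp).mul_const w).cexp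
  unfold hfun
  convert h4 using 1
  simp

lemma hfun_taylor (w : ℂ) : ∃ a : ℕ → ℂ, a 0 = 1 ∧ a 1 = -w ∧ ∀ T : ℕ, ∃ C : ℝ,
    ∀ x ∈ Set.Icc (0:ℝ) 2⁻¹,
      ‖hfun w x - ∑ k ∈ Finset.range (T+1), a k * (x:ℂ)^k‖ ≤ C * x^(T+1) := by
  set I := Set.Icc (0:ℝ) 2⁻¹ with hI
  have h0I : (0:ℝ) ∈ I := by norm_num [hI]
  have hud : UniqueDiffWithinAt ℝ I 0 := (uniqueDiffOn_Icc (by norm_num)) 0 h0I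
  refine ⟨fun k => (k.factorial : ℂ)⁻¹ * iteratedDerivWithin k (hfun w) I 0, ?_, ?_, ?_⟩
  · simp [iteratedDerivWithin_zero, hfun]
  · show ((Nat.factorial 1 : ℂ))⁻¹ * iteratedDerivWithin 1 (hfun w) I 0 = -w
    rw [iteratedDerivWithin_one,
      (hfun_hasDerivAt w).hasDerivWithinAt.derivWithin hud]
    simp
  · intro T
    obtain ⟨C, hC⟩ := exists_taylor_mean_remainder_bound (by norm_num : (0:ℝ) ≤ 2⁻¹)
      ((hfun_contDiffOn w).of_le (by exact_mod_cast le_top))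
    refine ⟨C, fun x hx => ?_⟩
    have heq : taylorWithinEval (hfun w) T I 0 x
        = ∑ k ∈ Finset.range (T+1), ((k.factorial : ℂ)⁻¹ * iteratedDerivWithin k (hfun w) I 0) * (x:ℂ)^k := by
      rw [taylor_within_apply]
      refine Finset.sum_congr rfl fun k _ => ?_
      rw [Complex.real_smul]
      push_cast
      ring
    have := hC x hx
    rw [heq] at this
    simpa using this

lemma natCpow_eq (n : ℕ) (hn : 1 ≤ n) (w : ℂ) :
    (n:ℂ)^w = Complex.exp ((Real.log n : ℂ) * w) := by
  have h0 : (n:ℂ) ≠ 0 := by exact_mod_cast (Nat.pos_of_ne_zero (by omega)).ne'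
  rw [Complex.cpow_def_of_ne_zero h0]
  congr 1
  rw [show (n:ℂ) = ((n:ℝ):ℂ) by push_cast; ring, ← Complex.ofReal_log (by positivity)]

lemma sub_one_cpow (n : ℕ) (hn : 2 ≤ n) (w : ℂ) :
    ((n:ℂ) - 1)^w = (n:ℂ)^w * hfun w (n:ℝ)⁻¹ := by
  have hn1 : (1:ℝ) < (n:ℝ) := by exact_mod_cast hn
  have hlog : Real.log ((n:ℝ) - 1) = Real.log n + Real.log (1 - (n:ℝ)⁻¹) := by
    rw [← Real.log_mul (by linarith) (by
      have : (n:ℝ)⁻¹ < 1 := by rw [inv_lt_one_iff₀]; right; linarith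
      intro h; nlinarith)]
    congr 1
    field_simp
  have hpos : (0:ℝ) < (n:ℝ) - 1 := by linarith
  have h1 : ((n:ℂ) - 1) = (((n:ℝ) - 1 : ℝ) : ℂ) := by push_cast; ring
  have h2 : ((((n:ℝ) - 1 : ℝ)) : ℂ) ≠ 0 := by
    exact_mod_cast ne_of_gt hpos
  rw [h1, Complex.cpow_def_of_ne_zero h2,
    ← Complex.ofReal_log hpos.le, hlog, natCpow_eq n (by omega), hfun, ← Complex.exp_add]
  push_cast
  ring_nf

lemma cpow_mul_inv_pow (n : ℕ) (hn : 1 ≤ n) (w : ℂ) (k : ℕ) :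
    (n:ℂ)^w * (((n:ℝ)⁻¹ : ℝ) : ℂ)^k = (n:ℂ)^(w - (k:ℂ)) := by
  have h0 : (n:ℂ) ≠ 0 := by exact_mod_cast (Nat.pos_of_ne_zero (by omega)).ne'
  have h1 : (((n:ℝ)⁻¹ : ℝ) : ℂ) = ((n:ℂ))⁻¹ := by push_cast; ring
  rw [h1, inv_pow, ← Complex.cpow_natCast, ← Complex.cpow_neg, sub_eq_add_neg,
    Complex.cpow_add _ _ h0]

lemma gfun_asymExp (s : ℂ) (hs1 : s + 1 ≠ 0) :
    ∃ dg : ℕ → ℂ, AsymExp (s - 1)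
      (fun n : ℕ => (n:ℂ)^s - ((n:ℂ)^(s+1) - ((n:ℂ)-1)^(s+1))/(s+1)) dg := by
  obtain ⟨a, ha0, ha1, hT⟩ := hfun_taylor (s+1)
  refine ⟨fun m => a (m+2) / (s+1), ?_⟩
  intro T
  obtain ⟨C, hC⟩ := hT (T+1)
  set g : ℕ → ℂ := fun n : ℕ => (n:ℂ)^s - ((n:ℂ)^(s+1) - ((n:ℂ)-1)^(s+1))/(s+1) with hg
  have key : ∀ n : ℕ, 2 ≤ n →
      g n - ∑ m ∈ Finset.range T, (a (m+2) / (s+1)) * (n:ℂ)^(s - 1 - (m:ℂ))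
      = (n:ℂ)^(s+1)/(s+1) *
        (hfun (s+1) (n:ℝ)⁻¹ - ∑ k ∈ Finset.range (T+2), a k * (((n:ℝ)⁻¹ : ℝ):ℂ)^k) := by
    intro n hn
    have hn1 : 1 ≤ n := by omega
    have hmul : (n:ℂ)^(s+1) * ∑ k ∈ Finset.range (T+2), a k * (((n:ℝ)⁻¹ : ℝ):ℂ)^k
        = ∑ k ∈ Finset.range (T+2), a k * (n:ℂ)^(s+1-(k:ℂ)) := by
      rw [Finset.mul_sum]
      exact Finset.sum_congr rfl fun k _ => by
        rw [← cpow_mul_inv_pow n hn1 (s+1) k]; ring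
    have hsplit : ∑ k ∈ Finset.range (T+2), a k * (n:ℂ)^(s+1-(k:ℂ))
        = a 0 * (n:ℂ)^(s+1) + a 1 * (n:ℂ)^s
          + ∑ m ∈ Finset.range T, a (m+2) * (n:ℂ)^(s-1-(m:ℂ)) := by
      rw [Finset.sum_range_succ' (fun k => a k * (n:ℂ)^(s+1-(k:ℂ))) (T+1),
        Finset.sum_range_succ' (fun k => a (k+1) * (n:ℂ)^(s+1-((k+1:ℕ):ℂ))) T]
      have e0 : s + 1 - ((0:ℕ):ℂ) = s + 1 := by push_cast; ring
      have e1 : s + 1 - ((0+1:ℕ):ℂ) = s := by push_cast; ring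
      have e2 : ∀ m : ℕ, s + 1 - ((m+1+1:ℕ):ℂ) = s - 1 - (m:ℂ) := by
        intro m; push_cast; ring
      rw [e0, e1]
      rw [Finset.sum_congr rfl (fun m _ => by rw [e2 m])]
      ring
    have hdiv : ∑ m ∈ Finset.range T, (a (m+2) / (s+1)) * (n:ℂ)^(s - 1 - (m:ℂ))
        = (∑ m ∈ Finset.range T, a (m+2) * (n:ℂ)^(s-1-(m:ℂ))) / (s+1) := by
      rw [Finset.sum_div]
      exact Finset.sum_congr rfl fun m _ => by ring
    simp only [hg]
    rw [hdiv, sub_one_cpow n hn (s+1),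
      show (n:ℂ)^(s+1)/(s+1) * (hfun (s+1) (n:ℝ)⁻¹
          - ∑ k ∈ Finset.range (T+2), a k * (((n:ℝ)⁻¹ : ℝ):ℂ)^k)
        = ((n:ℂ)^(s+1) * hfun (s+1) (n:ℝ)⁻¹)/(s+1)
          - ((n:ℂ)^(s+1) * ∑ k ∈ Finset.range (T+2), a k * (((n:ℝ)⁻¹ : ℝ):ℂ)^k)/(s+1)
        from by ring,
      hmul, hsplit, ha0, ha1]
    field_simp
    ring
  -- now the bound
  set V := ‖g 1 - ∑ m ∈ Finset.range T, (a (m+2) / (s+1)) * (1:ℂ)^(s - 1 - (m:ℂ))‖ with hV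
  refine ⟨max (C / ‖s+1‖) V, ?_⟩
  intro n hn
  rcases eq_or_lt_of_le hn with h1 | h2
  · -- n = 1
    rw [← h1]
    have h1r : ((1:ℕ):ℝ) ^ ((s-1).re - (T:ℝ)) = 1 := by
      rw [Nat.cast_one, Real.one_rpow]
    rw [h1r, mul_one]
    refine le_trans ?_ (le_max_right _ _)
    rw [hV]
    norm_num
  · -- n ≥ 2
    have hn2 : 2 ≤ n := h2
    have hpos : (0:ℝ) < n := by positivity
    have hx : (n:ℝ)⁻¹ ∈ Set.Icc (0:ℝ) 2⁻¹ := by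
      constructor
      · positivity
      · rw [inv_le_inv₀ hpos (by norm_num)]
        exact_mod_cast hn2
    have hb : ‖hfun (s+1) (n:ℝ)⁻¹ - ∑ k ∈ Finset.range (T+2), a k * (((n:ℝ)⁻¹ : ℝ):ℂ)^k‖
        ≤ C * ((n:ℝ)⁻¹)^(T+2) := hC ((n:ℝ)⁻¹) hx
    rw [key n hn2, norm_mul, norm_div, norm_natCpow n hn]
    have hA : (0:ℝ) ≤ (n:ℝ)^(s+1).re / ‖s+1‖ := by positivity
    calc (n:ℝ)^(s+1).re / ‖s+1‖ *
          ‖hfun (s+1) (n:ℝ)⁻¹ - ∑ k ∈ Finset.range (T+2), a k * (((n:ℝ)⁻¹ : ℝ):ℂ)^k‖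
        ≤ (n:ℝ)^(s+1).re / ‖s+1‖ * (C * ((n:ℝ)⁻¹)^(T+2)) :=
          mul_le_mul_of_nonneg_left hb hA
      _ = C / ‖s+1‖ * ((n:ℝ) ^ ((s-1).re - (T:ℝ))) := by
          rw [show ((n:ℝ)⁻¹)^(T+2) = (n:ℝ) ^ (-((T:ℝ)+2)) from by
            rw [← Real.rpow_natCast ((n:ℝ)⁻¹) (T+2), Real.inv_rpow hpos.le,
              ← Real.rpow_neg hpos.le]
            norm_num,
            show (n:ℝ)^(s+1).re / ‖s+1‖ * (C * (n:ℝ) ^ (-((T:ℝ)+2)))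
              = C / ‖s+1‖ * ((n:ℝ)^(s+1).re * (n:ℝ) ^ (-((T:ℝ)+2))) from by ring,
            ← Real.rpow_add hpos]
          congr 2
          simp [Complex.add_re, Complex.sub_re, Complex.one_re]
          ring
      _ ≤ max (C / ‖s+1‖) V * ((n:ℝ) ^ ((s-1).re - (T:ℝ))) :=
          mul_le_mul_of_nonneg_right (le_max_left _ _) (Real.rpow_nonneg hpos.le _)

lemma AsymExp.shift {s : ℂ} {f d : ℕ → ℂ} (h : AsymExp s f d) :
    AsymExp (s-1) (fun n => f n - d 0 * (n:ℂ)^s) (fun m => d (m+1)) := by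
  intro T
  obtain ⟨C, hC⟩ := h (T+1)
  refine ⟨C, fun n hn => ?_⟩
  have e : (f n - d 0 * (n:ℂ)^s) - ∑ m ∈ Finset.range T, d (m+1) * (n:ℂ)^(s-1-(m:ℂ))
      = f n - ∑ m ∈ Finset.range (T+1), d m * (n:ℂ)^(s-(m:ℂ)) := by
    rw [Finset.sum_range_succ' (fun m => d m * (n:ℂ)^(s-(m:ℂ))) T]
    have h2 : ∀ m : ℕ, s - ((m+1:ℕ):ℂ) = s - 1 - (m:ℂ) := fun m => by push_cast; ring
    rw [Finset.sum_congr rfl (fun m _ => by rw [← h2 m]),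
      show s - ((0:ℕ):ℂ) = s from by push_cast; ring]
    ring
  have e2 : (s-1).re - (T:ℝ) = s.re - ((T+1:ℕ):ℝ) := by
    simp [Complex.sub_re, Complex.one_re]; ring
  beta_reduce
  rw [e, e2]
  exact hC n hn

lemma telescope_cpow (s1 : ℂ) (hs1 : s1 ≠ 0) (N : ℕ) :
    ∑ n ∈ Finset.Icc 1 N, ((n:ℂ)^s1 - ((n:ℂ)-1)^s1) = (N:ℂ)^s1 := by
  induction N with
  | zero => simp [Complex.zero_cpow hs1]
  | succ N ih =>
    rw [Finset.sum_Icc_succ_top (by omega : 1 ≤ N + 1), ih,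
      show (((N+1:ℕ):ℂ) - 1) = (N:ℂ) from by push_cast; ring]
    ring

lemma asymexp_tendsto {s : ℂ} {f d : ℕ → ℂ} (h : AsymExp s f d) (hs : s.re < -1) :
    ∃ L : ℂ, Tendsto (fun N : ℕ => ∑ n ∈ Finset.Icc 1 N, f n) atTop (𝓝 L) := by
  obtain ⟨C, hC⟩ := h 0
  have hb : ∀ n : ℕ, ‖f (n+1)‖ ≤ C * ((n+1:ℕ):ℝ)^s.re := by
    intro n
    have := hC (n+1) (by omega)
    simpa using this
  have hsum : Summable (fun n : ℕ => f (n+1)) := by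
    apply Summable.of_norm_bounded ?_ hb
    apply Summable.mul_left
    have h1 : Summable (fun n : ℕ => ((n:ℝ))^s.re) := Real.summable_nat_rpow.2 (by linarith)
    exact (summable_nat_add_iff 1).2 h1
  refine ⟨∑' n, f (n+1), ?_⟩
  apply hsum.hasSum.tendsto_sum_nat.congr
  intro N
  rw [← Finset.Ico_add_one_right_eq_Icc, Finset.sum_Ico_eq_sum_range]
  simp [add_comm]

lemma lemA : ∀ K : ℕ, ∀ s : ℂ, (∀ m : ℤ, s ≠ (m:ℂ)) → s.re < (K:ℝ) - 1 →
    ∀ f d : ℕ → ℂ, AsymExp s f d →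
    ∃ (c : ℕ → ℂ) (L : ℂ), ∀ M : ℕ, s.re + 1 < (M:ℝ) →
      Tendsto (fun N : ℕ => (∑ n ∈ Finset.Icc 1 N, f n)
        - ∑ m ∈ Finset.range (M+1), c m * (N:ℂ)^(s + 1 - (m:ℂ))) atTop (𝓝 L) := by
  intro K
  induction K with
  | zero =>
    intro s hs hsre f d hfd
    obtain ⟨L, hL⟩ := asymexp_tendsto hfd (by simpa using hsre)
    refine ⟨fun _ => 0, L, fun M hM => ?_⟩
    apply hL.congr
    intro N
    simp
  | succ K ih =>
    intro s hs hsre f d hfd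
    have hs1 : s + 1 ≠ 0 := by
      intro h
      exact hs (-1) (by push_cast; linear_combination h)
    have hsm : ∀ m : ℤ, s - 1 ≠ (m:ℂ) := by
      intro m h
      exact hs (m+1) (by push_cast; linear_combination h)
    have hr : AsymExp (s-1) (fun n => f n - d 0 * (n:ℂ)^s) (fun m => d (m+1)) := hfd.shift
    obtain ⟨dg, hg⟩ := gfun_asymExp s hs1
    have hre : (s-1).re < (K:ℝ) - 1 := by
      simp only [Complex.sub_re, Complex.one_re]
      push_cast at hsre ⊢
      linarith
    obtain ⟨cr, Lr, hcr⟩ := ih (s-1) hsm hre _ _ hr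
    obtain ⟨cg, Lg, hcg⟩ := ih (s-1) hsm hre _ _ hg
    set c : ℕ → ℂ := fun m => if m = 0 then d 0 / (s+1) else d 0 * cg (m-1) + cr (m-1) with hc
    refine ⟨c, d 0 * Lg + Lr, ?_⟩
    have Hstep : ∀ M : ℕ, 1 ≤ M → s.re + 1 < (M:ℝ) →
        Tendsto (fun N : ℕ => (∑ n ∈ Finset.Icc 1 N, f n)
          - ∑ m ∈ Finset.range (M+1), c m * (N:ℂ)^(s + 1 - (m:ℂ))) atTop
          (𝓝 (d 0 * Lg + Lr)) := by
      intro M hM1 hM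
      have hM' : (s-1).re + 1 < ((M-1:ℕ):ℝ) := by
        rw [Nat.cast_sub hM1]
        simp only [Complex.sub_re, Complex.one_re]
        push_cast
        linarith
      have hG := hcg (M-1) hM'
      have hR := hcr (M-1) hM'
      rw [Nat.sub_add_cancel hM1] at hG hR
      have hcomb := ((tendsto_const_nhds (x := d 0)).mul hG).add hR
      apply hcomb.congr
      intro N
      beta_reduce
      have hps : ∑ n ∈ Finset.Icc 1 N, (n:ℂ)^s
          = (N:ℂ)^(s+1)/(s+1) + ∑ n ∈ Finset.Icc 1 N,
            ((n:ℂ)^s - ((n:ℂ)^(s+1) - ((n:ℂ)-1)^(s+1))/(s+1)) := by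
        have ht := telescope_cpow (s+1) hs1 N
        have h1 : ∑ n ∈ Finset.Icc 1 N, (n:ℂ)^s
            = ∑ n ∈ Finset.Icc 1 N, ((((n:ℂ)^s - ((n:ℂ)^(s+1) - ((n:ℂ)-1)^(s+1))/(s+1)))
               + ((n:ℂ)^(s+1) - ((n:ℂ)-1)^(s+1))/(s+1)) :=
          Finset.sum_congr rfl fun n _ => by ring
        rw [h1, Finset.sum_add_distrib, ← Finset.sum_div, ht]
        ring
      have hsumf : ∑ n ∈ Finset.Icc 1 N, f n
          = d 0 * ∑ n ∈ Finset.Icc 1 N, (n:ℂ)^s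
            + ∑ n ∈ Finset.Icc 1 N, (f n - d 0 * (n:ℂ)^s) := by
        rw [Finset.mul_sum, ← Finset.sum_add_distrib]
        exact Finset.sum_congr rfl fun n _ => by ring
      have hcsum : ∑ m ∈ Finset.range (M+1), c m * (N:ℂ)^(s + 1 - (m:ℂ))
          = d 0/(s+1) * (N:ℂ)^(s+1)
            + (d 0 * ∑ m ∈ Finset.range M, cg m * (N:ℂ)^(s - 1 + 1 - (m:ℂ))
               + ∑ m ∈ Finset.range M, cr m * (N:ℂ)^(s - 1 + 1 - (m:ℂ))) := by
        rw [Finset.sum_range_succ' (fun m => c m * (N:ℂ)^(s + 1 - (m:ℂ))) M]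
        have hc0 : c 0 = d 0 / (s+1) := by simp [hc]
        have hterm : ∀ m : ℕ, c (m+1) * (N:ℂ)^(s + 1 - ((m+1:ℕ):ℂ))
            = cg m * (N:ℂ)^(s - 1 + 1 - (m:ℂ)) * d 0 + cr m * (N:ℂ)^(s - 1 + 1 - (m:ℂ)) := by
          intro m
          have : c (m+1) = d 0 * cg m + cr m := by simp [hc]
          rw [this, show s + 1 - ((m+1:ℕ):ℂ) = s - 1 + 1 - (m:ℂ) from by push_cast; ring]
          ring
        rw [Finset.sum_congr rfl fun m _ => hterm m, Finset.sum_add_distrib,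
          ← Finset.sum_mul, hc0, show s + 1 - ((0:ℕ):ℂ) = s + 1 from by push_cast; ring]
        ring
      rw [hsumf, hps, hcsum]
      ring
    intro M hM
    rcases Nat.eq_zero_or_pos M with rfl | hM1
    · have h1t := Hstep 1 le_rfl (by norm_num at hM ⊢; linarith)
      have hz : Tendsto (fun N : ℕ => c 1 * (N:ℂ)^(s + 1 - ((1:ℕ):ℂ))) atTop (𝓝 0) := by
        rw [show s + 1 - ((1:ℕ):ℂ) = s from by push_cast; ring]
        simpa using (cpow_tendsto_zero (by norm_num at hM; linarith : s.re < 0)).const_mul (c 1)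
      have := h1t.add hz
      rw [add_zero] at this
      apply this.congr
      intro N
      rw [Finset.sum_range_succ (fun m => c m * (N:ℂ)^(s + 1 - (m:ℂ))) 1]
      ring
    · exact Hstep M hM1 hM

lemma sum_symm_split (φ : ℝ → ℂ) (N : ℕ) :
    ∑ n ∈ Finset.Icc (-(N:ℤ)) (N:ℤ), φ (n:ℝ)
      = φ 0 + ∑ n ∈ Finset.Icc 1 N, (φ (n:ℝ) + φ (-(n:ℝ))) := by
  induction N with
  | zero => simp
  | succ N ih =>
    have hcast : (((N+1:ℕ)):ℤ) = (N:ℤ) + 1 := by push_cast; ring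
    rw [hcast]
    have hset : Finset.Icc (-((N:ℤ)+1)) ((N:ℤ)+1)
        = insert (-((N:ℤ)+1)) (insert ((N:ℤ)+1) (Finset.Icc (-(N:ℤ)) (N:ℤ))) := by
      ext x
      simp only [Finset.mem_Icc, Finset.mem_insert]
      omega
    rw [hset, Finset.sum_insert (by simp only [Finset.mem_insert, Finset.mem_Icc]; omega),
      Finset.sum_insert (by simp only [Finset.mem_Icc]; omega), ih,
      Finset.sum_Icc_succ_top (by omega : 1 ≤ N + 1)
        (fun n : ℕ => φ (n:ℝ) + φ (-(n:ℝ)))]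
    push_cast
    ring


/-- **Existence of the Hadamard finite part of symmetric sums of a non-integer order classical
symbol on `ℝ`.**  For `σ` a classical symbol of order `a ∉ ℤ` on `ℝ`, there are constants
`(b_j)` and `S` such that for every integer `J > Re(a)+1`,
`Σ_{n=-N}^{N} σ(n) − Σ_{j=0}^{J} b_j N^{a+1−j} → S` as the integer `N → ∞`. -/
theorem hadamard_finite_part_symmetric_sum_exists
    (χ : ℝ → ℝ) (hχ : IsCutoff1 χ) (a : ℂ) (ha : ∀ m : ℤ, a ≠ m)
    (σ : ℝ → ℂ) (σh : ℕ → ℝ → ℂ) (hσ : IsClassicalSymbol1 χ a σ σh) :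
    ∃ (b : ℕ → ℂ) (S : ℂ), ∀ J : ℕ, a.re + 1 < J →
      Tendsto (fun N : ℕ =>
          (∑ n ∈ Finset.Icc (-(N : ℤ)) (N : ℤ), σ (n : ℝ))
            - ∑ j ∈ Finset.range (J + 1), b j * (N : ℂ) ^ (a + 1 - (j : ℂ)))
        atTop (𝓝 S) := by
  set F : ℕ → ℂ := fun n => σ (n:ℝ) + σ (-(n:ℝ)) with hF
  have hAE : AsymExp a F (fun j => σh j 1 + σh j (-1)) := by
    intro T
    obtain ⟨C, hC⟩ := hσ.estimate T 0
    have hC0 : 0 ≤ C := by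
      have h0 := hC 0
      have h1 : (0:ℝ) ≤ ‖iteratedDeriv 0
          (fun y : ℝ => σ y - ∑ j ∈ Finset.range T, (χ y : ℂ) * σh j y) 0‖ := norm_nonneg _
      simp only [abs_zero, add_zero, Real.one_rpow] at h0
      linarith
    refine ⟨2 * C * 2 ^ |a.re - T|, fun n hn => ?_⟩
    have hnR : (1:ℝ) ≤ (n:ℝ) := by exact_mod_cast hn
    have hnpos : (0:ℝ) < n := by linarith
    have hd : F n - ∑ j ∈ Finset.range T, (σh j 1 + σh j (-1)) * (n:ℂ)^(a - (j:ℂ))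
        = (σ (n:ℝ) - ∑ j ∈ Finset.range T, (χ (n:ℝ) : ℂ) * σh j (n:ℝ))
          + (σ (-(n:ℝ)) - ∑ j ∈ Finset.range T, (χ (-(n:ℝ)) : ℂ) * σh j (-(n:ℝ))) := by
      rw [hF]
      have hχ1 : χ (n:ℝ) = 1 := hχ.eq_one_far _ (by rw [abs_of_pos hnpos]; exact hnR)
      have hχ2 : χ (-(n:ℝ)) = 1 := hχ.eq_one_far _ (by rw [abs_neg, abs_of_pos hnpos]; exact hnR)
      have hh1 : ∀ j : ℕ, σh j (n:ℝ) = (n:ℂ)^(a - (j:ℂ)) * σh j 1 := by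
        intro j
        have := hσ.homog j (n:ℝ) hnpos 1 one_ne_zero
        rw [mul_one] at this
        rw [this]
        norm_num
      have hh2 : ∀ j : ℕ, σh j (-(n:ℝ)) = (n:ℂ)^(a - (j:ℂ)) * σh j (-1) := by
        intro j
        have := hσ.homog j (n:ℝ) hnpos (-1) (by norm_num)
        rw [show (n:ℝ) * (-1) = -(n:ℝ) from by ring] at this
        rw [this]
        norm_num
      rw [hχ1, hχ2]
      simp only [Complex.ofReal_one, one_mul]
      rw [Finset.sum_congr rfl (fun j _ => hh1 j), Finset.sum_congr rfl (fun j _ => hh2 j)]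
      have hsplit : ∑ j ∈ Finset.range T, (σh j 1 + σh j (-1)) * (n:ℂ)^(a - (j:ℂ))
          = ∑ j ∈ Finset.range T, (n:ℂ)^(a - (j:ℂ)) * σh j 1
            + ∑ j ∈ Finset.range T, (n:ℂ)^(a - (j:ℂ)) * σh j (-1) := by
        rw [← Finset.sum_add_distrib]
        exact Finset.sum_congr rfl fun j _ => by ring
      rw [hsplit]
      ring
    rw [hd]
    have e1 := hC (n:ℝ)
    have e2 := hC (-(n:ℝ))
    rw [iteratedDeriv_zero] at e1 e2
    rw [abs_neg] at e2
    rw [abs_of_pos hnpos] at e1 e2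
    have hexp : a.re - (T:ℝ) - ((0:ℕ):ℝ) = a.re - T := by norm_num
    rw [hexp] at e1 e2
    calc ‖(σ (n:ℝ) - ∑ j ∈ Finset.range T, (χ (n:ℝ) : ℂ) * σh j (n:ℝ))
          + (σ (-(n:ℝ)) - ∑ j ∈ Finset.range T, (χ (-(n:ℝ)) : ℂ) * σh j (-(n:ℝ)))‖
        ≤ ‖σ (n:ℝ) - ∑ j ∈ Finset.range T, (χ (n:ℝ) : ℂ) * σh j (n:ℝ)‖
          + ‖σ (-(n:ℝ)) - ∑ j ∈ Finset.range T, (χ (-(n:ℝ)) : ℂ) * σh j (-(n:ℝ))‖ :=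
          norm_add_le _ _
      _ ≤ 2 * (C * (1 + (n:ℝ)) ^ (a.re - T)) := by linarith
      _ ≤ 2 * C * 2 ^ |a.re - T| * (n:ℝ) ^ (a.re - T) := by
          have := one_add_rpow_le n hn (a.re - T)
          nlinarith [Real.rpow_nonneg hnpos.le (a.re - T),
            Real.rpow_nonneg (by norm_num : (0:ℝ) ≤ 2) |a.re - T|]
  obtain ⟨c, L, hL⟩ := lemA (⌈a.re⌉₊ + 2) a ha
    (by
      have := Nat.le_ceil a.re
      push_cast
      linarith)
    F _ hAE
  refine ⟨c, σ 0 + L, fun J hJ => ?_⟩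
  have ht := ((tendsto_const_nhds (x := σ (0:ℝ))).add (hL J hJ))
  apply ht.congr
  intro N
  rw [sum_symm_split σ N]
  rw [hF]
  push_cast
  ring
end

section
/- Let σ be a classical symbol of order a on ℝ with a ∉ ℤ, and suppose (b_j)_{j∈ℕ} and S ∈ ℂ satisfy lim_{N→∞} ( Σ_{n=-N}^{N} σ(n) − Σ_{j=0}^{J} b_j N^{a+1−j} ) = S for every integer J > Re(a)+1. Then for every p ∈ ℤ there exist constants (b_j^p)_{j∈ℕ} such that lim_{N→∞} ( Σ_{n=-N}^{N} σ(n+p) − Σ_{j=0}^{J} b_j^p N^{a+1−j} ) = S for every integer J > Re(a)+1; that is, the Hadamard finite part of the symmetric sums is invariant under translation of σ by any integer. -/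
open MeasureTheory Filter Finset Complex
open scoped Topology

private lemma cpow_nat_tendsto_zero (w : ℂ) (hw : w.re < 0) :
    Tendsto (fun N : ℕ => (N : ℂ) ^ w) atTop (𝓝 0) := by
  have h0 : Tendsto (fun x : ℝ => x ^ w.re) atTop (𝓝 0) := by
    simpa using tendsto_rpow_neg_atTop (y := -w.re) (by linarith)
  have h1 : Tendsto (fun N : ℕ => ((N : ℝ)) ^ w.re) atTop (𝓝 0) :=
    h0.comp tendsto_natCast_atTop_atTop
  refine squeeze_zero_norm' ?_ h1
  filter_upwards [eventually_gt_atTop 0] with N hN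
  exact le_of_eq (Complex.norm_natCast_cpow_of_pos hN _)


private lemma sum_Icc_shift (g : ℤ → ℂ) (A B : ℤ) (h : A ≤ B) :
    ∑ n ∈ Finset.Icc A B, g (n + 1) = (∑ n ∈ Finset.Icc A B, g n) + g (B + 1) - g A := by
  have hmap : ∑ n ∈ Finset.Icc A B, g (n + 1) = ∑ n ∈ Finset.Icc (A + 1) (B + 1), g n := by
    rw [← Finset.map_add_right_Icc, Finset.sum_map]; rfl
  have h1 : Finset.Icc A (B + 1) = insert (B + 1) (Finset.Icc A B) := by
    ext x; simp only [Finset.mem_Icc, Finset.mem_insert]; omega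
  have h2 : Finset.Icc A (B + 1) = insert A (Finset.Icc (A + 1) (B + 1)) := by
    ext x; simp only [Finset.mem_Icc, Finset.mem_insert]; omega
  have n1 : (B + 1) ∉ Finset.Icc A B := by simp
  have n2 : A ∉ Finset.Icc (A + 1) (B + 1) := by simp
  have e1 : ∑ n ∈ Finset.Icc A (B + 1), g n = g (B + 1) + ∑ n ∈ Finset.Icc A B, g n := by
    rw [h1, Finset.sum_insert n1]
  have e2 : ∑ n ∈ Finset.Icc A (B + 1), g n = g A + ∑ n ∈ Finset.Icc (A + 1) (B + 1), g n := by
    rw [h2, Finset.sum_insert n2]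
  rw [hmap]; linear_combination e1 - e2

private lemma tail_tendsto_zero (a : ℂ) (c : ℕ → ℂ) {K₁ K₂ : ℕ} (hK : K₁ ≤ K₂)
    (h1 : a.re + 1 < K₁ + 1) :
    Tendsto (fun N : ℕ => ∑ j ∈ Finset.Ico (K₁ + 1) (K₂ + 1),
      c j * (N : ℂ) ^ (a + 1 - (j : ℂ))) atTop (𝓝 0) := by
  have : Tendsto (fun N : ℕ => ∑ j ∈ Finset.Ico (K₁ + 1) (K₂ + 1),
      c j * (N : ℂ) ^ (a + 1 - (j : ℂ))) atTop (𝓝 (∑ j ∈ Finset.Ico (K₁ + 1) (K₂ + 1), 0)) := by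
    refine tendsto_finset_sum _ fun j hj => ?_
    simp only [Finset.mem_Ico] at hj
    have hre : (a + 1 - (j : ℂ)).re < 0 := by
      have : (K₁ : ℝ) + 1 ≤ (j : ℝ) := by exact_mod_cast hj.1
      simp only [Complex.sub_re, Complex.add_re, Complex.one_re, Complex.natCast_re]
      linarith
    simpa using (cpow_nat_tendsto_zero _ hre).const_mul (c j)
  simpa using this


private lemma change_J {a : ℂ} (c : ℕ → ℂ) (f : ℕ → ℂ) (L : ℂ) {J₁ J₂ : ℕ}
    (h1 : a.re + 1 < J₁) (h2 : a.re + 1 < J₂)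
    (h : Tendsto (fun N : ℕ => f N - ∑ j ∈ Finset.range (J₁ + 1),
        c j * (N : ℂ) ^ (a + 1 - (j : ℂ))) atTop (𝓝 L)) :
    Tendsto (fun N : ℕ => f N - ∑ j ∈ Finset.range (J₂ + 1),
        c j * (N : ℂ) ^ (a + 1 - (j : ℂ))) atTop (𝓝 L) := by
  rcases le_total J₁ J₂ with hle | hle
  · have key : ∀ N : ℕ, ∑ j ∈ Finset.range (J₂ + 1), c j * (N : ℂ) ^ (a + 1 - (j : ℂ))
        = (∑ j ∈ Finset.range (J₁ + 1), c j * (N : ℂ) ^ (a + 1 - (j : ℂ)))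
          + ∑ j ∈ Finset.Ico (J₁ + 1) (J₂ + 1), c j * (N : ℂ) ^ (a + 1 - (j : ℂ)) := by
      intro N
      simp only [Finset.range_eq_Ico]
      exact (Finset.sum_Ico_consecutive _ (Nat.zero_le _) (by omega)).symm
    have := h.sub (tail_tendsto_zero a c hle (by linarith))
    simp only [sub_zero] at this
    refine this.congr fun N => ?_
    rw [key N]; ring
  · have key : ∀ N : ℕ, ∑ j ∈ Finset.range (J₁ + 1), c j * (N : ℂ) ^ (a + 1 - (j : ℂ))
        = (∑ j ∈ Finset.range (J₂ + 1), c j * (N : ℂ) ^ (a + 1 - (j : ℂ)))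
          + ∑ j ∈ Finset.Ico (J₂ + 1) (J₁ + 1), c j * (N : ℂ) ^ (a + 1 - (j : ℂ)) := by
      intro N
      simp only [Finset.range_eq_Ico]
      exact (Finset.sum_Ico_consecutive _ (Nat.zero_le _) (by omega)).symm
    have := h.add (tail_tendsto_zero a c hle (by linarith))
    simp only [add_zero] at this
    refine this.congr fun N => ?_
    rw [key N]; ring

private lemma cpow_shift_expansion (w : ℂ) (κ : ℝ) (I : ℕ) (hI : w.re < I) :
    ∃ e : ℕ → ℂ, Tendsto (fun N : ℕ =>
      ((((N : ℝ) + κ : ℝ)) : ℂ) ^ w - ∑ i ∈ Finset.range I, e i * (N : ℂ) ^ (w - (i : ℂ)))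
      atTop (𝓝 0) := by
  have hA : AnalyticAt ℂ (fun z : ℂ => z ^ w) 1 := by
    exact (analyticAt_id).cpow analyticAt_const (by simp)
  obtain ⟨p, hp⟩ := hA
  refine ⟨fun i => p.coeff i * (κ : ℂ) ^ i, ?_⟩
  have hO := hp.isBigO_sub_partialSum_pow I
  rw [Asymptotics.isBigO_iff] at hO
  obtain ⟨C, hC⟩ := hO
  have hten : Tendsto (fun N : ℕ => ((κ : ℂ) / (N : ℂ))) atTop (𝓝 0) := by
    have : Tendsto (fun N : ℕ => ((N : ℂ))⁻¹) atTop (𝓝 0) := by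
      simpa using (tendsto_natCast_atTop_atTop (R := ℝ)).inv_tendsto_atTop.ofReal
    simpa [div_eq_mul_inv] using this.const_mul (κ : ℂ)
  have hev : ∀ᶠ N : ℕ in atTop,
      ‖(1 + (κ : ℂ) / (N : ℂ)) ^ w - p.partialSum I ((κ : ℂ) / (N : ℂ))‖
        ≤ C * (|κ| / (N : ℝ)) ^ I := by
    filter_upwards [hten.eventually hC, eventually_gt_atTop 0] with N hN hN0
    have hnorm : ‖(κ : ℂ) / (N : ℂ)‖ = |κ| / (N : ℝ) := by
      rw [norm_div]
      simp [Complex.norm_real, Real.norm_eq_abs]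
    have habs : ‖(‖(κ : ℂ) / (N : ℂ)‖ : ℝ) ^ I‖ = (|κ| / (N : ℝ)) ^ I := by
      rw [Real.norm_eq_abs, _root_.abs_of_nonneg (pow_nonneg (norm_nonneg _) I), hnorm]
    calc ‖(1 + (κ : ℂ) / (N : ℂ)) ^ w - p.partialSum I ((κ : ℂ) / (N : ℂ))‖
        ≤ C * ‖(‖(κ : ℂ) / (N : ℂ)‖ : ℝ) ^ I‖ := hN
      _ = C * (|κ| / (N : ℝ)) ^ I := by rw [habs]
  -- the key identity for large N
  have hkey : ∀ᶠ N : ℕ in atTop,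
      ((((N : ℝ) + κ : ℝ)) : ℂ) ^ w
        - ∑ i ∈ Finset.range I, (p.coeff i * (κ : ℂ) ^ i) * (N : ℂ) ^ (w - (i : ℂ))
      = (N : ℂ) ^ w * ((1 + (κ : ℂ) / (N : ℂ)) ^ w - p.partialSum I ((κ : ℂ) / (N : ℂ))) := by
    filter_upwards [(tendsto_natCast_atTop_atTop (R := ℝ)).eventually_gt_atTop (|κ|),
      eventually_gt_atTop 0] with N hN hN0
    have hNpos : (0 : ℝ) < (N : ℝ) := by exact_mod_cast hN0
    have hNne : ((N : ℂ)) ≠ 0 := Nat.cast_ne_zero.mpr hN0.ne'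
    have hfac : ((((N : ℝ) + κ : ℝ)) : ℂ) ^ w = (N : ℂ) ^ w * (1 + (κ : ℂ) / (N : ℂ)) ^ w := by
      have h1 : (N : ℝ) + κ = (N : ℝ) * (1 + κ / (N : ℝ)) := by field_simp
      have h2 : (0 : ℝ) ≤ 1 + κ / (N : ℝ) := by
        have h3 : (0 : ℝ) ≤ ((N : ℝ) + κ) / (N : ℝ) :=
          div_nonneg (by linarith [neg_abs_le κ]) hNpos.le
        have h4 : ((N : ℝ) + κ) / (N : ℝ) = 1 + κ / (N : ℝ) := by field_simp
        linarith [h4 ▸ h3]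
      have hcast : ((1 + κ / (N : ℝ) : ℝ) : ℂ) = 1 + (κ : ℂ) / (N : ℂ) := by
        push_cast
        ring
      rw [h1, Complex.ofReal_mul, mul_cpow_ofReal_nonneg (Nat.cast_nonneg N) h2, hcast,
        Complex.ofReal_natCast]
    have hsum : ∑ i ∈ Finset.range I, (p.coeff i * (κ : ℂ) ^ i) * (N : ℂ) ^ (w - (i : ℂ))
        = (N : ℂ) ^ w * p.partialSum I ((κ : ℂ) / (N : ℂ)) := by
      rw [FormalMultilinearSeries.partialSum, Finset.mul_sum]
      refine Finset.sum_congr rfl fun i _ => ?_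
      rw [FormalMultilinearSeries.apply_eq_pow_smul_coeff, smul_eq_mul,
        Complex.cpow_sub _ _ hNne, Complex.cpow_natCast, div_pow]
      have hpne : ((N : ℂ)) ^ i ≠ 0 := pow_ne_zero _ hNne
      field_simp
    rw [hfac, hsum]
    ring
  -- squeeze
  have hg : Tendsto (fun N : ℕ => C * |κ| ^ I * (N : ℝ) ^ (w.re - (I : ℝ))) atTop (𝓝 0) := by
    have h0 : Tendsto (fun x : ℝ => x ^ (w.re - (I : ℝ))) atTop (𝓝 0) := by
      have := tendsto_rpow_neg_atTop (y := (I : ℝ) - w.re) (by linarith)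
      refine this.congr fun x => ?_
      rw [neg_sub]
    simpa using (h0.comp (tendsto_natCast_atTop_atTop (R := ℝ))).const_mul (C * |κ| ^ I)
  refine squeeze_zero_norm' ?_ hg
  filter_upwards [hkey, hev, eventually_gt_atTop 0] with N hk he hN0
  have hNpos : (0 : ℝ) < (N : ℝ) := by exact_mod_cast hN0
  rw [hk, norm_mul, Complex.norm_natCast_cpow_of_pos hN0]
  calc (N : ℝ) ^ w.re * ‖(1 + (κ : ℂ) / (N : ℂ)) ^ w - p.partialSum I ((κ : ℂ) / (N : ℂ))‖
      ≤ (N : ℝ) ^ w.re * (C * (|κ| / (N : ℝ)) ^ I) :=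
        mul_le_mul_of_nonneg_left he (Real.rpow_nonneg hNpos.le _)
    _ = C * |κ| ^ I * (N : ℝ) ^ (w.re - (I : ℝ)) := by
        rw [div_pow, Real.rpow_sub hNpos, ← Real.rpow_natCast (N : ℝ) I]
        ring

private lemma boundary_expansion {χ : ℝ → ℝ} (hχ : IsCutoff1 χ) {a : ℂ}
    {σ : ℝ → ℂ} {σh : ℕ → ℝ → ℂ} (hσ : IsClassicalSymbol1 χ a σ σh)
    (J₀ : ℕ) (hJ₀ : a.re + 1 < J₀) (u : ℝ) (hu : u = 1 ∨ u = -1) (c : ℝ) :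
    ∃ d : ℕ → ℂ, Tendsto (fun N : ℕ =>
      σ (u * (N : ℝ) + c) - ∑ j ∈ Finset.range (J₀ + 1), d j * (N : ℂ) ^ (a + 1 - (j : ℂ)))
      atTop (𝓝 0) := by
  have hu2 : u * u = 1 := by rcases hu with h | h <;> rw [h] <;> norm_num
  have hune : u ≠ 0 := by rcases hu with h | h <;> rw [h] <;> norm_num
  -- expansions of (N + u*c)^(a-m)
  have hcp : ∀ m : ℕ, ∃ e : ℕ → ℂ, Tendsto (fun N : ℕ =>
      ((((N : ℝ) + u * c : ℝ)) : ℂ) ^ (a - (m : ℂ))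
        - ∑ i ∈ Finset.range (J₀ + 1), e i * (N : ℂ) ^ ((a - (m : ℂ)) - (i : ℂ)))
      atTop (𝓝 0) := by
    intro m
    refine cpow_shift_expansion (a - (m : ℂ)) (u * c) (J₀ + 1) ?_
    have h1 : (a - (m : ℂ)).re = a.re - m := by simp [Complex.sub_re]
    rw [h1]
    push_cast
    have h2 : (0:ℝ) ≤ m := Nat.cast_nonneg m
    linarith
  choose e he using hcp
  set dm : ℕ → ℕ → ℂ := fun m j => if m < j then e m (j - m - 1) else 0 with hdm
  have hm_exp : ∀ m ∈ Finset.range J₀, Tendsto (fun N : ℕ =>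
      ((((N : ℝ) + u * c : ℝ)) : ℂ) ^ (a - (m : ℂ))
        - ∑ j ∈ Finset.range (J₀ + 1), dm m j * (N : ℂ) ^ (a + 1 - (j : ℂ)))
      atTop (𝓝 0) := by
    intro m hmJ
    rw [Finset.mem_range] at hmJ
    have hsum1 : ∀ N : ℕ, ∑ j ∈ Finset.range (J₀ + 1), dm m j * (N : ℂ) ^ (a + 1 - (j : ℂ))
        = ∑ i ∈ Finset.range (J₀ - m), e m i * (N : ℂ) ^ ((a - (m : ℂ)) - (i : ℂ)) := by
      intro N
      have hfil : (Finset.range (J₀ + 1)).filter (fun j => m < j) = Finset.Ico (m + 1) (J₀ + 1) := by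
        ext x
        simp only [Finset.mem_filter, Finset.mem_range, Finset.mem_Ico]
        omega
      have step1 : ∑ j ∈ Finset.range (J₀ + 1), dm m j * (N : ℂ) ^ (a + 1 - (j : ℂ))
          = ∑ j ∈ Finset.Ico (m + 1) (J₀ + 1), e m (j - m - 1) * (N : ℂ) ^ (a + 1 - (j : ℂ)) := by
        rw [← hfil, Finset.sum_filter]
        refine Finset.sum_congr rfl fun j _ => ?_
        by_cases h : m < j
        · simp [hdm, h]
        · simp [hdm, h]
      rw [step1, Finset.sum_Ico_eq_sum_range]
      have hJm : J₀ + 1 - (m + 1) = J₀ - m := by omega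
      rw [hJm]
      refine Finset.sum_congr rfl fun i _ => ?_
      have h1 : m + 1 + i - m - 1 = i := by omega
      have h2 : a + 1 - ((m + 1 + i : ℕ) : ℂ) = (a - (m : ℂ)) - (i : ℂ) := by
        push_cast
        ring
      rw [h1, h2]
    -- split the full e-sum
    have hsplit : ∀ N : ℕ, ∑ i ∈ Finset.range (J₀ + 1), e m i * (N : ℂ) ^ ((a - (m : ℂ)) - (i : ℂ))
        = (∑ i ∈ Finset.range (J₀ - m), e m i * (N : ℂ) ^ ((a - (m : ℂ)) - (i : ℂ)))
          + ∑ i ∈ Finset.Ico (J₀ - m) (J₀ + 1), e m i * (N : ℂ) ^ ((a - (m : ℂ)) - (i : ℂ)) := by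
      intro N
      simp only [Finset.range_eq_Ico]
      exact (Finset.sum_Ico_consecutive _ (Nat.zero_le _) (by omega)).symm
    have htail : Tendsto (fun N : ℕ => ∑ i ∈ Finset.Ico (J₀ - m) (J₀ + 1),
        e m i * (N : ℂ) ^ ((a - (m : ℂ)) - (i : ℂ))) atTop (𝓝 0) := by
      have : Tendsto (fun N : ℕ => ∑ i ∈ Finset.Ico (J₀ - m) (J₀ + 1),
          e m i * (N : ℂ) ^ ((a - (m : ℂ)) - (i : ℂ))) atTop
          (𝓝 (∑ i ∈ Finset.Ico (J₀ - m) (J₀ + 1), 0)) := by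
        refine tendsto_finset_sum _ fun i hi => ?_
        rw [Finset.mem_Ico] at hi
        have hmi : J₀ ≤ m + i := by omega
        have hre : ((a - (m : ℂ)) - (i : ℂ)).re < 0 := by
          simp only [Complex.sub_re, Complex.natCast_re]
          have : (J₀ : ℝ) ≤ (m : ℝ) + i := by exact_mod_cast hmi
          linarith
        simpa using (cpow_nat_tendsto_zero _ hre).const_mul (e m i)
      simpa using this
    have := (he m).add htail
    rw [add_zero] at this
    refine this.congr fun N => ?_
    rw [hsum1 N, hsplit N]
    ring
  -- the remainder term
  obtain ⟨C, hC⟩ := hσ.estimate J₀ 0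
  have habs_lower : ∀ᶠ N : ℕ in atTop, 1 + |c| ≤ (N : ℝ) := by
    exact (tendsto_natCast_atTop_atTop (R := ℝ)).eventually_ge_atTop _
  have hRtend : Tendsto (fun N : ℕ => σ (u * (N : ℝ) + c)
      - ∑ m ∈ Finset.range J₀, ((χ (u * (N : ℝ) + c) : ℝ) : ℂ) * σh m (u * (N : ℝ) + c))
      atTop (𝓝 0) := by
    have hinfty : Tendsto (fun N : ℕ => 1 + |u * (N : ℝ) + c|) atTop atTop := by
      rcases hu with h | h
      · have h1 : Tendsto (fun N : ℕ => u * (N : ℝ) + c) atTop atTop := by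
          rw [h]
          simp only [one_mul]
          exact tendsto_atTop_add_const_right _ c (tendsto_natCast_atTop_atTop)
        exact tendsto_atTop_add_const_left _ 1 (tendsto_abs_atTop_atTop.comp h1)
      · have h1 : Tendsto (fun N : ℕ => u * (N : ℝ) + c) atTop atBot := by
          rw [h]
          have : Tendsto (fun N : ℕ => -(N : ℝ)) atTop atBot :=
            tendsto_neg_atBot_iff.mpr (tendsto_natCast_atTop_atTop)
          simpa [neg_one_mul] using tendsto_atBot_add_const_right _ c this
        exact tendsto_atTop_add_const_left _ 1 (tendsto_abs_atBot_atTop.comp h1)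
    have hg : Tendsto (fun N : ℕ => C * (1 + |u * (N : ℝ) + c|) ^ (a.re - J₀ - (0:ℕ))) atTop (𝓝 0) := by
      have h0 : Tendsto (fun x : ℝ => x ^ (a.re - (J₀:ℝ) - ((0:ℕ):ℝ))) atTop (𝓝 0) := by
        have := tendsto_rpow_neg_atTop (y := (J₀ : ℝ) + ((0:ℕ):ℝ) - a.re) (by push_cast; linarith)
        refine this.congr fun x => ?_
        congr 1
        push_cast
        ring
      simpa using (h0.comp hinfty).const_mul C
    refine squeeze_zero_norm' ?_ hg
    filter_upwards with N
    have := hC (u * (N : ℝ) + c)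
    rwa [iteratedDeriv_zero] at this
  -- combine
  refine ⟨fun j => ∑ m ∈ Finset.range J₀, σh m u * dm m j, ?_⟩
  have hall : Tendsto (fun N : ℕ =>
      (σ (u * (N : ℝ) + c)
        - ∑ m ∈ Finset.range J₀, ((χ (u * (N : ℝ) + c) : ℝ) : ℂ) * σh m (u * (N : ℝ) + c))
      + ∑ m ∈ Finset.range J₀, σh m u *
          (((((N : ℝ) + u * c : ℝ)) : ℂ) ^ (a - (m : ℂ))
            - ∑ j ∈ Finset.range (J₀ + 1), dm m j * (N : ℂ) ^ (a + 1 - (j : ℂ))))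
      atTop (𝓝 0) := by
    have hsum0 : Tendsto (fun N : ℕ => ∑ m ∈ Finset.range J₀, σh m u *
        (((((N : ℝ) + u * c : ℝ)) : ℂ) ^ (a - (m : ℂ))
          - ∑ j ∈ Finset.range (J₀ + 1), dm m j * (N : ℂ) ^ (a + 1 - (j : ℂ))))
        atTop (𝓝 (∑ m ∈ Finset.range J₀, 0)) := by
      refine tendsto_finset_sum _ fun m hm => ?_
      simpa using ((hm_exp m hm).const_mul (σh m u))
    rw [Finset.sum_const, smul_zero] at hsum0
    simpa using hRtend.add hsum0
  refine hall.congr' ?_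
  filter_upwards [habs_lower] with N hN
  have hNc : (0 : ℝ) < (N : ℝ) + u * c := by
    have : |u * c| = |c| := by rw [abs_mul, (by rcases hu with h|h <;> rw [h] <;> norm_num : |u| = 1), one_mul]
    have h2 := neg_abs_le (u * c)
    rw [this] at h2
    linarith
  have harg : u * (N : ℝ) + c = ((N : ℝ) + u * c) * u := by
    have : ((N : ℝ) + u * c) * u = u * N + (u * u) * c := by ring
    rw [this, hu2, one_mul]
  have habs1 : 1 ≤ |u * (N : ℝ) + c| := by
    rw [harg, abs_mul, (by rcases hu with h|h <;> rw [h] <;> norm_num : |u| = 1), mul_one,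
      abs_of_pos hNc]
    have h2 := neg_abs_le (u * c)
    have h3 : |u * c| = |c| := by
      rw [abs_mul, (by rcases hu with h|h <;> rw [h] <;> norm_num : |u| = 1), one_mul]
    rw [h3] at h2
    linarith
  have hchi : χ (u * (N : ℝ) + c) = 1 := hχ.eq_one_far _ habs1
  have hhom : ∀ m ∈ Finset.range J₀, σh m (u * (N : ℝ) + c)
      = ((((N : ℝ) + u * c : ℝ)) : ℂ) ^ (a - (m : ℂ)) * σh m u := by
    intro m _
    rw [harg]
    exact hσ.homog m _ hNc u hune
  -- now the pointwise identity
  have hswap : ∑ j ∈ Finset.range (J₀ + 1),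
      (∑ m ∈ Finset.range J₀, σh m u * dm m j) * (N : ℂ) ^ (a + 1 - (j : ℂ))
      = ∑ m ∈ Finset.range J₀, ∑ j ∈ Finset.range (J₀ + 1),
          σh m u * (dm m j * (N : ℂ) ^ (a + 1 - (j : ℂ))) := by
    rw [Finset.sum_comm]
    refine Finset.sum_congr rfl fun j _ => ?_
    rw [Finset.sum_mul]
    refine Finset.sum_congr rfl fun m _ => ?_
    ring
  calc σ (u * (N : ℝ) + c)
        - ∑ m ∈ Finset.range J₀, ((χ (u * (N : ℝ) + c) : ℝ) : ℂ) * σh m (u * (N : ℝ) + c)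
      + ∑ m ∈ Finset.range J₀, σh m u *
          (((((N : ℝ) + u * c : ℝ)) : ℂ) ^ (a - (m : ℂ))
            - ∑ j ∈ Finset.range (J₀ + 1), dm m j * (N : ℂ) ^ (a + 1 - (j : ℂ)))
      = σ (u * (N : ℝ) + c)
        - ∑ j ∈ Finset.range (J₀ + 1),
            (∑ m ∈ Finset.range J₀, σh m u * dm m j) * (N : ℂ) ^ (a + 1 - (j : ℂ)) := by
        rw [hswap]
        simp only [hchi, Complex.ofReal_one, one_mul, mul_sub]
        rw [Finset.sum_congr rfl hhom, Finset.sum_sub_distrib]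
        have : ∀ m ∈ Finset.range J₀,
            σh m u * ((((N : ℝ) + u * c : ℝ) : ℂ) ^ (a - (m : ℂ)))
            = (((N : ℝ) + u * c : ℝ) : ℂ) ^ (a - (m : ℂ)) * σh m u := fun m _ => mul_comm _ _
        rw [Finset.sum_congr rfl this]
        simp only [Finset.mul_sum, mul_assoc]
        ring


/-- **`ℤ`-translation invariance of the Hadamard finite part of symmetric sums.**
If `σ` is a classical symbol of order `a ∉ ℤ` on `ℝ` whose symmetric sums admit the asymptotic
expansion `Σ_{n=-N}^{N} σ(n) ∼ Σ_j b_j N^{a+1−j} + S`, then for every `p ∈ ℤ` the translated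
symbol `σ(·+p)` admits an analogous expansion with the same constant term `S`. -/
theorem hadamard_finite_part_symmetric_sum_translation_invariant
    (χ : ℝ → ℝ) (hχ : IsCutoff1 χ) (a : ℂ) (ha : ∀ m : ℤ, a ≠ m)
    (σ : ℝ → ℂ) (σh : ℕ → ℝ → ℂ) (hσ : IsClassicalSymbol1 χ a σ σh)
    (b : ℕ → ℂ) (S : ℂ)
    (hb : ∀ J : ℕ, a.re + 1 < J →
      Tendsto (fun N : ℕ =>
          (∑ n ∈ Finset.Icc (-(N : ℤ)) (N : ℤ), σ (n : ℝ))
            - ∑ j ∈ Finset.range (J + 1), b j * (N : ℂ) ^ (a + 1 - (j : ℂ)))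
        atTop (𝓝 S)) :
    ∀ p : ℤ, ∃ bp : ℕ → ℂ, ∀ J : ℕ, a.re + 1 < J →
      Tendsto (fun N : ℕ =>
          (∑ n ∈ Finset.Icc (-(N : ℤ)) (N : ℤ), σ ((n : ℝ) + (p : ℝ)))
            - ∑ j ∈ Finset.range (J + 1), bp j * (N : ℂ) ^ (a + 1 - (j : ℂ)))
        atTop (𝓝 S) := by
  obtain ⟨J₀, hJ₀⟩ := exists_nat_gt (a.re + 1)
  intro p
  suffices h : ∃ bp : ℕ → ℂ, Tendsto (fun N : ℕ =>
      (∑ n ∈ Finset.Icc (-(N : ℤ)) (N : ℤ), σ ((n : ℝ) + (p : ℝ)))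
        - ∑ j ∈ Finset.range (J₀ + 1), bp j * (N : ℂ) ^ (a + 1 - (j : ℂ)))
      atTop (𝓝 S) by
    obtain ⟨bp, hbp⟩ := h
    exact ⟨bp, fun J hJ => change_J bp _ S hJ₀ hJ hbp⟩
  -- the exact index-shift identities
  have key_up : ∀ q : ℤ, ∀ N : ℕ,
      (∑ n ∈ Finset.Icc (-(N : ℤ)) (N : ℤ), σ ((n : ℝ) + ((q + 1 : ℤ) : ℝ)))
      = (∑ n ∈ Finset.Icc (-(N : ℤ)) (N : ℤ), σ ((n : ℝ) + (q : ℝ)))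
        + σ ((N : ℝ) + 1 + (q : ℝ)) - σ (-(N : ℝ) + (q : ℝ)) := by
    intro q N
    have hAB : (-(N : ℤ)) ≤ (N : ℤ) := neg_le_self (Int.natCast_nonneg N)
    have hshift := sum_Icc_shift (fun m : ℤ => σ ((m : ℝ) + (q : ℝ))) (-(N : ℤ)) (N : ℤ) hAB
    have hcongr : ∀ n ∈ Finset.Icc (-(N : ℤ)) (N : ℤ),
        σ ((n : ℝ) + ((q + 1 : ℤ) : ℝ)) = σ (((n + 1 : ℤ) : ℝ) + (q : ℝ)) := by
      intro n _
      congr 1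
      push_cast
      ring
    rw [Finset.sum_congr rfl hcongr, hshift]
    have e1 : (((N : ℤ) + 1 : ℤ) : ℝ) + (q : ℝ) = (N : ℝ) + 1 + (q : ℝ) := by push_cast; ring
    have e2 : ((-(N : ℤ) : ℤ) : ℝ) + (q : ℝ) = -(N : ℝ) + (q : ℝ) := by push_cast; ring
    rw [e1, e2]
  have key_down : ∀ q : ℤ, ∀ N : ℕ,
      (∑ n ∈ Finset.Icc (-(N : ℤ)) (N : ℤ), σ ((n : ℝ) + ((q - 1 : ℤ) : ℝ)))
      = (∑ n ∈ Finset.Icc (-(N : ℤ)) (N : ℤ), σ ((n : ℝ) + (q : ℝ)))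
        - σ ((N : ℝ) + (q : ℝ)) + σ (-(N : ℝ) + ((q : ℝ) - 1)) := by
    intro q N
    have hAB : (-(N : ℤ)) ≤ (N : ℤ) := neg_le_self (Int.natCast_nonneg N)
    have hshift := sum_Icc_shift (fun m : ℤ => σ ((m : ℝ) + ((q - 1 : ℤ) : ℝ))) (-(N : ℤ)) (N : ℤ) hAB
    have hcongr : ∀ n ∈ Finset.Icc (-(N : ℤ)) (N : ℤ),
        σ (((n + 1 : ℤ) : ℝ) + ((q - 1 : ℤ) : ℝ)) = σ ((n : ℝ) + (q : ℝ)) := by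
      intro n _
      congr 1
      push_cast
      ring
    rw [Finset.sum_congr rfl hcongr] at hshift
    have e1 : (((N : ℤ) + 1 : ℤ) : ℝ) + ((q - 1 : ℤ) : ℝ) = (N : ℝ) + (q : ℝ) := by push_cast; ring
    have e2 : ((-(N : ℤ) : ℤ) : ℝ) + ((q - 1 : ℤ) : ℝ) = -(N : ℝ) + ((q : ℝ) - 1) := by
      push_cast; ring
    rw [e1, e2] at hshift
    linear_combination -hshift
  -- one upward step
  have step_up : ∀ q : ℤ,
      (∃ bp : ℕ → ℂ, Tendsto (fun N : ℕ =>
        (∑ n ∈ Finset.Icc (-(N : ℤ)) (N : ℤ), σ ((n : ℝ) + (q : ℝ)))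
          - ∑ j ∈ Finset.range (J₀ + 1), bp j * (N : ℂ) ^ (a + 1 - (j : ℂ))) atTop (𝓝 S)) →
      (∃ bp : ℕ → ℂ, Tendsto (fun N : ℕ =>
        (∑ n ∈ Finset.Icc (-(N : ℤ)) (N : ℤ), σ ((n : ℝ) + ((q + 1 : ℤ) : ℝ)))
          - ∑ j ∈ Finset.range (J₀ + 1), bp j * (N : ℂ) ^ (a + 1 - (j : ℂ))) atTop (𝓝 S)) := by
    rintro q ⟨bp, hbp⟩
    obtain ⟨d₁, hd₁⟩ := boundary_expansion hχ hσ J₀ hJ₀ 1 (Or.inl rfl) (1 + (q : ℝ))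
    obtain ⟨d₂, hd₂⟩ := boundary_expansion hχ hσ J₀ hJ₀ (-1) (Or.inr rfl) (q : ℝ)
    have harg1 : ∀ N : ℕ, (1 : ℝ) * (N : ℝ) + (1 + (q : ℝ)) = (N : ℝ) + 1 + (q : ℝ) :=
      fun N => by ring
    have harg2 : ∀ N : ℕ, (-1 : ℝ) * (N : ℝ) + (q : ℝ) = -(N : ℝ) + (q : ℝ) :=
      fun N => by ring
    have hd₁' : Tendsto (fun N : ℕ => σ ((N : ℝ) + 1 + (q : ℝ))
        - ∑ j ∈ Finset.range (J₀ + 1), d₁ j * (N : ℂ) ^ (a + 1 - (j : ℂ))) atTop (𝓝 0) :=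
      hd₁.congr fun N => by rw [harg1 N]
    have hd₂' : Tendsto (fun N : ℕ => σ (-(N : ℝ) + (q : ℝ))
        - ∑ j ∈ Finset.range (J₀ + 1), d₂ j * (N : ℂ) ^ (a + 1 - (j : ℂ))) atTop (𝓝 0) :=
      hd₂.congr fun N => by rw [harg2 N]
    refine ⟨fun j => bp j + d₁ j - d₂ j, ?_⟩
    have hcomb := (hbp.add hd₁').sub hd₂'
    rw [add_zero, sub_zero] at hcomb
    refine hcomb.congr fun N => ?_
    rw [key_up q N]
    simp only [add_mul, sub_mul, Finset.sum_add_distrib, Finset.sum_sub_distrib]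
    ring
  -- one downward step
  have step_down : ∀ q : ℤ,
      (∃ bp : ℕ → ℂ, Tendsto (fun N : ℕ =>
        (∑ n ∈ Finset.Icc (-(N : ℤ)) (N : ℤ), σ ((n : ℝ) + (q : ℝ)))
          - ∑ j ∈ Finset.range (J₀ + 1), bp j * (N : ℂ) ^ (a + 1 - (j : ℂ))) atTop (𝓝 S)) →
      (∃ bp : ℕ → ℂ, Tendsto (fun N : ℕ =>
        (∑ n ∈ Finset.Icc (-(N : ℤ)) (N : ℤ), σ ((n : ℝ) + ((q - 1 : ℤ) : ℝ)))
          - ∑ j ∈ Finset.range (J₀ + 1), bp j * (N : ℂ) ^ (a + 1 - (j : ℂ))) atTop (𝓝 S)) := by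
    rintro q ⟨bp, hbp⟩
    obtain ⟨d₁, hd₁⟩ := boundary_expansion hχ hσ J₀ hJ₀ 1 (Or.inl rfl) (q : ℝ)
    obtain ⟨d₂, hd₂⟩ := boundary_expansion hχ hσ J₀ hJ₀ (-1) (Or.inr rfl) ((q : ℝ) - 1)
    have harg1 : ∀ N : ℕ, (1 : ℝ) * (N : ℝ) + (q : ℝ) = (N : ℝ) + (q : ℝ) :=
      fun N => by ring
    have harg2 : ∀ N : ℕ, (-1 : ℝ) * (N : ℝ) + ((q : ℝ) - 1) = -(N : ℝ) + ((q : ℝ) - 1) :=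
      fun N => by ring
    have hd₁' : Tendsto (fun N : ℕ => σ ((N : ℝ) + (q : ℝ))
        - ∑ j ∈ Finset.range (J₀ + 1), d₁ j * (N : ℂ) ^ (a + 1 - (j : ℂ))) atTop (𝓝 0) :=
      hd₁.congr fun N => by rw [harg1 N]
    have hd₂' : Tendsto (fun N : ℕ => σ (-(N : ℝ) + ((q : ℝ) - 1))
        - ∑ j ∈ Finset.range (J₀ + 1), d₂ j * (N : ℂ) ^ (a + 1 - (j : ℂ))) atTop (𝓝 0) :=
      hd₂.congr fun N => by rw [harg2 N]
    refine ⟨fun j => bp j - d₁ j + d₂ j, ?_⟩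
    have hcomb := (hbp.sub hd₁').add hd₂'
    rw [sub_zero, add_zero] at hcomb
    refine hcomb.congr fun N => ?_
    rw [key_down q N]
    simp only [add_mul, sub_mul, Finset.sum_add_distrib, Finset.sum_sub_distrib]
    ring
  induction p using Int.induction_on with
  | zero =>
    refine ⟨b, ?_⟩
    have := hb J₀ hJ₀
    refine this.congr fun N => ?_
    simp
  | succ i ih => exact step_up i ih
  | pred i ih => exact step_down (-(i : ℤ)) ih
end

section
/- Let λ₁, λ₂ : CS^{∉ℤ}(ℝ^d) → ℂ be linear, both coinciding with the same ρ on CS^{∉ℤ}(ℝ^d) ∩ CS^{<−d}(ℝ^d), and both ℤ^d-translation invariant. Then λ₁(∂^β σ) = λ₂(∂^β σ) for every σ ∈ CS^{∉ℤ}(ℝ^d) and every multi-index β ≠ 0; i.e. the value of a ℤ^d-translation invariant linear form on partial derivatives of non-integer order symbols is entirely determined by its restriction ρ. -/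
open MeasureTheory Filter Finset Complex Metric
open scoped Topology Pointwise Classical

noncomputable section

/-- A smooth cut-off function on `ℝ^d`: vanishes near `0`, identically `1` for `|x| ≥ 1`. -/
structure IsCutoff {d : ℕ} (χ : EuclideanSpace ℝ (Fin d) → ℝ) : Prop where
  smooth : ContDiff ℝ (⊤ : ℕ∞) χ
  eq_zero_near : ∃ ε > (0 : ℝ), ∀ x : EuclideanSpace ℝ (Fin d), ‖x‖ < ε → χ x = 0
  eq_one_far : ∀ x : EuclideanSpace ℝ (Fin d), 1 ≤ ‖x‖ → χ x = 1

/-- `σ` is a classical symbol (with constant coefficients) of order `a ∈ ℂ` on `ℝ^d`, with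
positively homogeneous components `σh j` of degree `a − j` and cut-off `χ`: for every `N` the
function `σ − Σ_{j<N} χ σh j` together with all its derivatives is
`O((1+|x|)^{Re a − N − k})`. -/
structure IsClassicalSymbol {d : ℕ} (χ : EuclideanSpace ℝ (Fin d) → ℝ) (a : ℂ)
    (σ : EuclideanSpace ℝ (Fin d) → ℂ) (σh : ℕ → EuclideanSpace ℝ (Fin d) → ℂ) : Prop where
  smooth : ContDiff ℝ (⊤ : ℕ∞) σ
  smooth_homog : ∀ j : ℕ, ContDiffOn ℝ (⊤ : ℕ∞) (σh j) {x : EuclideanSpace ℝ (Fin d) | x ≠ 0}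
  homog : ∀ j : ℕ, ∀ t : ℝ, 0 < t → ∀ x : EuclideanSpace ℝ (Fin d), x ≠ 0 →
    σh j (t • x) = (t : ℂ) ^ (a - (j : ℂ)) * σh j x
  estimate : ∀ N k : ℕ, ∃ C : ℝ, ∀ x : EuclideanSpace ℝ (Fin d),
    ‖iteratedFDeriv ℝ k
        (fun y : EuclideanSpace ℝ (Fin d) => σ y - ∑ j ∈ Finset.range N, (χ y : ℂ) * σh j y) x‖
      ≤ C * (1 + ‖x‖) ^ (a.re - N - k)

/-- The surface measure `μ_S` on the unit sphere `S^{d−1} ⊂ ℝ^d` induced by Lebesgue measure. -/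
noncomputable def sphereMeasure (d : ℕ) : Measure (sphere (0 : EuclideanSpace ℝ (Fin d)) 1) :=
  (volume : Measure (EuclideanSpace ℝ (Fin d))).toSphere

/-- `σ` is a classical symbol of order `a` on `ℝ^d` (for some cut-off and homogeneous
components). -/
def IsSymbolOfOrder {d : ℕ} (a : ℂ) (σ : EuclideanSpace ℝ (Fin d) → ℂ) : Prop :=
  ∃ (χ : EuclideanSpace ℝ (Fin d) → ℝ) (σh : ℕ → EuclideanSpace ℝ (Fin d) → ℂ),
    IsCutoff χ ∧ IsClassicalSymbol χ a σ σh

/-- `CS^{∉ℤ}(ℝ^d)`: classical symbols of non-integer order. -/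
def CSNonInt (d : ℕ) : Set (EuclideanSpace ℝ (Fin d) → ℂ) :=
  {σ | ∃ a : ℂ, (∀ m : ℤ, a ≠ m) ∧ IsSymbolOfOrder a σ}

/-- `CS^{<−d}(ℝ^d)`: classical symbols of order `a` with `Re(a) < −d`. -/
def CSNeg (d : ℕ) : Set (EuclideanSpace ℝ (Fin d) → ℂ) :=
  {σ | ∃ a : ℂ, a.re < -(d : ℝ) ∧ IsSymbolOfOrder a σ}

/-- Partial derivative `∂_i` of a function on `ℝ^d`. -/
noncomputable def pderiv' {d : ℕ} (i : Fin d) (f : EuclideanSpace ℝ (Fin d) → ℂ) :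
    EuclideanSpace ℝ (Fin d) → ℂ :=
  fun x => fderiv ℝ f x (EuclideanSpace.single i 1)

/-- Multi-index partial derivative `∂^β = ∂_0^{β 0} ⋯ ∂_{d-1}^{β (d-1)}`. -/
noncomputable def mderiv {d : ℕ} (β : Fin d → ℕ) (f : EuclideanSpace ℝ (Fin d) → ℂ) :
    EuclideanSpace ℝ (Fin d) → ℂ :=
  (List.finRange d).foldr (fun i g => (pderiv' i)^[β i] g) f

/-- The multi-indices `β` on `ℝ^d` with `|β| ≤ N`. -/
noncomputable def multiLE (d N : ℕ) : Finset (Fin d → ℕ) :=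
  (Fintype.piFinset fun _ : Fin d => Finset.range (N + 1)).filter fun β => ∑ i, β i ≤ N

/-- The multi-indices `β` on `ℝ^d` with `|β| = N`. -/
noncomputable def multiEQ (d N : ℕ) : Finset (Fin d → ℕ) :=
  (Fintype.piFinset fun _ : Fin d => Finset.range (N + 1)).filter fun β => ∑ i, β i = N

/-- `p^β = ∏_i p_i^{β_i}` (as a complex number), for `p ∈ ℝ^d` and a multi-index `β`. -/
noncomputable def mpow {d : ℕ} (p : EuclideanSpace ℝ (Fin d)) (β : Fin d → ℕ) : ℂ :=
  ∏ i, ((p i : ℝ) : ℂ) ^ β i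

/-- `β! = ∏_i (β_i)!` (as a complex number), for a multi-index `β`. -/
noncomputable def mfac {d : ℕ} (β : Fin d → ℕ) : ℂ := ∏ i, ((β i).factorial : ℂ)

/-- The vector of `ℝ^d` with integer coordinates `p ∈ ℤ^d`. -/
noncomputable def intVec {d : ℕ} (p : Fin d → ℤ) : EuclideanSpace ℝ (Fin d) :=
  (EuclideanSpace.equiv (Fin d) ℝ).symm fun i => (p i : ℝ)

/-- `ρ` is a linear form on `L¹(ℝ^d)`. -/
def RhoLinear {d : ℕ} (ρ : (EuclideanSpace ℝ (Fin d) → ℂ) → ℂ) : Prop :=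
  (∀ f g : EuclideanSpace ℝ (Fin d) → ℂ, Integrable f → Integrable g →
      ρ (f + g) = ρ f + ρ g) ∧
  ∀ (c : ℂ) (f : EuclideanSpace ℝ (Fin d) → ℂ), Integrable f → ρ (c • f) = c * ρ f

/-- `ρ` satisfies the Taylor expansion property (eq. (1.2) of the paper) on `CS^{<−d}(ℝ^d)`:
`ρ(σ(·+p)) = Σ_{|β|≤N} ρ(∂^βσ) p^β/β! + Σ_{|β|=N+1} (p^β/β!) ∫₀¹ (1−t)^N ρ(∂^βσ(·+tp)) dt`. -/
def RhoTaylor {d : ℕ} (ρ : (EuclideanSpace ℝ (Fin d) → ℂ) → ℂ) : Prop :=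
  ∀ σ ∈ CSNeg d, ∀ p : EuclideanSpace ℝ (Fin d), ∀ N : ℕ,
    ρ (fun x => σ (x + p)) =
      (∑ β ∈ multiLE d N, (mpow p β / mfac β) * ρ (mderiv β σ))
        + ∑ β ∈ multiEQ d (N + 1), (mpow p β / mfac β) *
            ∫ t in (0 : ℝ)..1, (((1 - t) ^ N : ℝ) : ℂ) *
              ρ (fun x => mderiv β σ (x + t • p))

/-- `lam` is a linear form on `CS^{∉ℤ}(ℝ^d)` (it preserves linear combinations that lie in
the set). -/
def LamLinear {d : ℕ} (lam : (EuclideanSpace ℝ (Fin d) → ℂ) → ℂ) : Prop :=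
  ∀ (c : ℂ) (σ τ : EuclideanSpace ℝ (Fin d) → ℂ),
    σ ∈ CSNonInt d → τ ∈ CSNonInt d → (c • σ + τ) ∈ CSNonInt d →
      lam (c • σ + τ) = c * lam σ + lam τ

/-- `lam` (extending `ρ`) is `ℝ^d`-translation invariant: for every non-integer order symbol
`σ` of order `a`, every `N` with `N+1 > Re(a)+d` and every `p ∈ ℝ^d`,
`Σ_{0<|β|≤N} lam(∂^βσ) p^β/β! + Σ_{|β|=N+1} (p^β/β!) ∫₀¹ (1−t)^N ρ(∂^βσ(·+tp)) dt = 0`. -/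
def RdTranslationInvariant {d : ℕ}
    (lam ρ : (EuclideanSpace ℝ (Fin d) → ℂ) → ℂ) : Prop :=
  ∀ (a : ℂ) (σ : EuclideanSpace ℝ (Fin d) → ℂ), (∀ m : ℤ, a ≠ m) → IsSymbolOfOrder a σ →
    ∀ N : ℕ, a.re + d < N + 1 → ∀ p : EuclideanSpace ℝ (Fin d),
      (∑ β ∈ (multiLE d N).filter (fun β => β ≠ 0), (mpow p β / mfac β) * lam (mderiv β σ))
        + ∑ β ∈ multiEQ d (N + 1), (mpow p β / mfac β) *
            ∫ t in (0 : ℝ)..1, (((1 - t) ^ N : ℝ) : ℂ) *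
              ρ (fun x => mderiv β σ (x + t • p)) = 0

/-- `lam` (extending `ρ`) is `ℤ^d`-translation invariant. -/
def ZdTranslationInvariant {d : ℕ}
    (lam ρ : (EuclideanSpace ℝ (Fin d) → ℂ) → ℂ) : Prop :=
  ∀ (a : ℂ) (σ : EuclideanSpace ℝ (Fin d) → ℂ), (∀ m : ℤ, a ≠ m) → IsSymbolOfOrder a σ →
    ∀ N : ℕ, a.re + d < N + 1 → ∀ p : Fin d → ℤ,
      (∑ β ∈ (multiLE d N).filter (fun β => β ≠ 0),
          (mpow (intVec p) β / mfac β) * lam (mderiv β σ))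
        + ∑ β ∈ multiEQ d (N + 1), (mpow (intVec p) β / mfac β) *
            ∫ t in (0 : ℝ)..1, (((1 - t) ^ N : ℝ) : ℂ) *
              ρ (fun x => mderiv β σ (x + t • intVec p)) = 0


lemma vanish : ∀ (d : ℕ) (S : Finset (Fin d → ℕ)) (c : (Fin d → ℕ) → ℂ),
    (∀ p : Fin d → ℤ, ∑ β ∈ S, c β * ∏ i, ((p i : ℂ)) ^ β i = 0) →
    ∀ β ∈ S, c β = 0 := by
  intro d
  induction d with
  | zero =>
    intro S c h β hβ
    have h0 := h (fun _ => 0)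
    simp only [Finset.univ_eq_empty, Finset.prod_empty, mul_one] at h0
    have hS : S = {β} := by
      ext γ
      simp [Subsingleton.elim γ β, hβ]
    rw [hS, Finset.sum_singleton] at h0
    exact h0
  | succ d ih =>
    intro S c h β hβ
    have hcoef : ∀ (k : ℕ) (p' : Fin d → ℤ),
        ∑ γ ∈ S.filter (fun γ => γ 0 = k),
          c γ * ∏ i : Fin d, ((p' i : ℂ)) ^ γ i.succ = 0 := by
      intro k p'
      set q : Polynomial ℂ :=
        ∑ γ ∈ S, Polynomial.C (c γ * ∏ i : Fin d, ((p' i : ℂ)) ^ γ i.succ)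
          * Polynomial.X ^ (γ 0) with hq
      have hroot : ∀ n : ℤ, q.eval (n : ℂ) = 0 := by
        intro n
        have hn := h (Fin.cons n p')
        rw [hq]
        rw [Polynomial.eval_finset_sum]
        rw [← hn]
        refine Finset.sum_congr rfl fun γ _ => ?_
        simp only [Polynomial.eval_mul, Polynomial.eval_C, Polynomial.eval_pow,
          Polynomial.eval_X]
        rw [Fin.prod_univ_succ]
        simp only [Fin.cons_succ, Fin.cons_zero]
        ring
      have hq0 : q = 0 := by
        apply Polynomial.eq_zero_of_infinite_isRoot
        apply Set.Infinite.mono (s := Set.range ((↑) : ℤ → ℂ))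
        · rintro x ⟨n, rfl⟩
          exact hroot n
        · exact Set.infinite_range_of_injective Int.cast_injective
      have hc := congrArg (fun r => Polynomial.coeff r k) hq0
      simp only [hq, Polynomial.finset_sum_coeff, Polynomial.coeff_C_mul,
        Polynomial.coeff_X_pow, Polynomial.coeff_zero, mul_ite, mul_one, mul_zero] at hc
      simp only [@eq_comm ℕ k] at hc
      rw [Finset.sum_filter]
      exact hc
    have key := ih ((S.filter (fun γ => γ 0 = β 0)).image Fin.tail)
        (fun γ' => c (Fin.cons (β 0) γ')) ?_ (Fin.tail β) ?_
    · rwa [Fin.cons_self_tail] at key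
    · intro p'
      rw [Finset.sum_image ?_]
      · rw [← hcoef (β 0) p']
        refine Finset.sum_congr rfl fun γ hγ => ?_
        have hγ0 : γ 0 = β 0 := (Finset.mem_filter.mp hγ).2
        show c (Fin.cons (β 0) (Fin.tail γ)) * ∏ i : Fin d, ((p' i : ℂ)) ^ Fin.tail γ i = _
        rw [← hγ0, Fin.cons_self_tail]
        rfl
      · intro γ hγ γ' hγ' htail
        have h1 : γ 0 = β 0 := (Finset.mem_filter.mp hγ).2
        have h2 : γ' 0 = β 0 := (Finset.mem_filter.mp hγ').2
        rw [← Fin.cons_self_tail γ, ← Fin.cons_self_tail γ', h1, h2, htail]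
    · exact Finset.mem_image_of_mem _ (Finset.mem_filter.mpr ⟨hβ, rfl⟩)

/-- **The value on partial derivatives of a `ℤ^d`-translation invariant linear form on
non-integer order classical symbols is entirely determined by its restriction `ρ` to
`L¹`-symbols.** -/
theorem zd_invariant_derivatives_determined {d : ℕ}
    (ρ lam₁ lam₂ : (EuclideanSpace ℝ (Fin d) → ℂ) → ℂ)
    (hρlin : RhoLinear ρ) (hρTaylor : RhoTaylor ρ)
    (hlin₁ : LamLinear lam₁) (hlin₂ : LamLinear lam₂)
    (hrestrict₁ : ∀ σ ∈ CSNonInt d ∩ CSNeg d, lam₁ σ = ρ σ)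
    (hrestrict₂ : ∀ σ ∈ CSNonInt d ∩ CSNeg d, lam₂ σ = ρ σ)
    (hinv₁ : ZdTranslationInvariant lam₁ ρ) (hinv₂ : ZdTranslationInvariant lam₂ ρ) :
    ∀ σ ∈ CSNonInt d, ∀ β : Fin d → ℕ, β ≠ 0 →
      lam₁ (mderiv β σ) = lam₂ (mderiv β σ) := by
  rintro σ ⟨a, ha, hsym⟩ β hβ
  set N : ℕ := max (∑ i, β i) ⌈a.re + d⌉₊ with hNdef
  have hNlt : a.re + d < N + 1 := by
    have h1 : a.re + d ≤ (⌈a.re + d⌉₊ : ℝ) := Nat.le_ceil _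
    have h2 : ((⌈a.re + d⌉₊ : ℕ) : ℝ) ≤ (N : ℝ) := by
      exact_mod_cast Nat.le_max_right (∑ i, β i) ⌈a.re + d⌉₊
    linarith
  have hmem : β ∈ (multiLE d N).filter (fun γ => γ ≠ 0) := by
    refine Finset.mem_filter.mpr ⟨?_, hβ⟩
    refine Finset.mem_filter.mpr ⟨?_, ?_⟩
    · refine Fintype.mem_piFinset.mpr fun i => ?_
      refine Finset.mem_range.mpr ?_
      have : β i ≤ ∑ j, β j := Finset.single_le_sum (fun j _ => Nat.zero_le _) (Finset.mem_univ i)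
      omega
    · exact le_max_left _ _
  set F := (multiLE d N).filter (fun γ => γ ≠ 0) with hF
  have hmp : ∀ (p : Fin d → ℤ) (γ : Fin d → ℕ),
      mpow (intVec p) γ = ∏ i, ((p i : ℂ)) ^ γ i := by
    intro p γ
    unfold mpow intVec
    refine Finset.prod_congr rfl fun i _ => ?_
    norm_num
  have key : ∀ p : Fin d → ℤ,
      ∑ γ ∈ F, ((lam₁ (mderiv γ σ) - lam₂ (mderiv γ σ)) / mfac γ)
        * ∏ i, ((p i : ℂ)) ^ γ i = 0 := by
    intro p
    have e₁ := hinv₁ a σ ha hsym N hNlt p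
    have e₂ := hinv₂ a σ ha hsym N hNlt p
    have hA : ∑ γ ∈ F, (mpow (intVec p) γ / mfac γ) * lam₁ (mderiv γ σ)
        = ∑ γ ∈ F, (mpow (intVec p) γ / mfac γ) * lam₂ (mderiv γ σ) := by
      rw [hF]
      linear_combination e₁ - e₂
    calc ∑ γ ∈ F, ((lam₁ (mderiv γ σ) - lam₂ (mderiv γ σ)) / mfac γ)
          * ∏ i, ((p i : ℂ)) ^ γ i
        = ∑ γ ∈ F, ((mpow (intVec p) γ / mfac γ) * lam₁ (mderiv γ σ)
            - (mpow (intVec p) γ / mfac γ) * lam₂ (mderiv γ σ)) := by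
          refine Finset.sum_congr rfl fun γ _ => ?_
          rw [hmp p γ]
          ring
      _ = 0 := by rw [Finset.sum_sub_distrib, hA, sub_self]
  have hzero := vanish d F _ key β hmem
  have hfac : mfac β ≠ 0 := by
    unfold mfac
    refine Finset.prod_ne_zero_iff.mpr fun i _ => ?_
    exact_mod_cast (Nat.factorial_ne_zero (β i))
  rcases div_eq_zero_iff.mp hzero with h | h
  · exact sub_eq_zero.mp h
  · exact absurd h hfac
end
end
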